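/- Let m ∈ (0,1), let K(m) = ∫₀^{π/2} (1 − m²sin²θ)^{−1/2} dθ and E(m) = ∫₀^{π/2} (1 − m²sin²θ)^{1/2} dθ, and define H₁(m) = (18m⁴/(1 − m² + m⁴))^{1/2}, H₂(m) = (H₁(m)³/(162m⁶))·(−2 + 3m² + 3m⁴ − 2m⁶), H₃(m) = (H₁(m)/(3m²))·(3E(m)/K(m) + m² − 2), and ρ̄(m) = (H₁(m)/(m²K(m)²))·(3H₂(m) + 2H₃(m))/(3H₂(m)H₃(m) + 4). Let λ, ν, μ, γ, η, k, P, s₁ be real numbers with λ ≠ 0, η ≠ 0, P ≠ 0, k ≠ 0, λν > 0, 3H₂(m) + 2H₃(m) ≠ 0 and 3H₂(m)H₃(m) + 4 ≠ 0, and set κ = (kK(m)/P)⁴·(12λ/ν)²·(m⁴ − m² + 1)/18. If −(μ + (s₁/3)η)·(2νκ^{3/2}/(5λ))·(3H₂(m) + 2H₃(m)) + (γ − 2λη/ν)·(ν²κ²/(7λ²))·(6H₂(m)H₃(m) + 8) = 0, then s₁ = (180/(7ρ̄(m)))·(k/P)²·(γ/η − 2λ/ν) − 3μ/η. -/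

import Mathlib

/-!
Write `A = 3H₂ + 2H₃`, `B = 3H₂H₃ + 4` and `t = (kK/P)²(12λ/ν)(m²/H₁)`. Since
`H₁² = 18m⁴/(1 − m² + m⁴)`, one has `κ = t²` with `t > 0` (as `K > 0` and `λ/ν > 0`), so
`κ^{3/2} = t³` and `κ² = t⁴`. The condition is then linear in `s₁`, with solution
`s₁ = (15νtB/(7λA))(γ/η − 2λ/ν) − 3μ/η`, and `15νtB/(7λA) = (180/(7ρ̄))(k/P)²` by the definition
of `ρ̄` (also when `B = 0`: then `ρ̄ = 0` and both sides vanish, as division by zero gives zero).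
-/

open Real

lemma integral_one_sub_sq_mul_sin_sq_rpow_pos {m : ℝ} (hm : m ^ 2 < 1) (p : ℝ) :
    0 < ∫ θ in (0 : ℝ)..(π / 2), (1 - m ^ 2 * sin θ ^ 2) ^ p := by
  have hbase : ∀ θ, 0 < 1 - m ^ 2 * sin θ ^ 2 := fun θ => by
    nlinarith [sin_sq_le_one θ, sq_nonneg m]
  have hcont : Continuous fun θ => (1 - m ^ 2 * sin θ ^ 2) ^ p :=
    (by fun_prop : Continuous fun θ => 1 - m ^ 2 * sin θ ^ 2).rpow_const
      fun θ => Or.inl (hbase θ).ne'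
  exact intervalIntegral.intervalIntegral_pos_of_pos_on (hcont.intervalIntegrable _ _)
    (fun θ _ => rpow_pos_of_pos (hbase θ) p) (by positivity)

lemma one_sub_sq_add_pow_four_pos (m : ℝ) : 0 < 1 - m ^ 2 + m ^ 4 := by
  nlinarith [sq_nonneg (m ^ 2 - 1 / 2)]

lemma rpow_half_sq {x : ℝ} (hx : 0 ≤ x) : (x ^ ((1 : ℝ) / 2)) ^ 2 = x := by
  rw [← sqrt_eq_rpow, sq_sqrt hx]

lemma sq_rpow_three_halves {t : ℝ} (ht : 0 ≤ t) : (t ^ 2) ^ ((3 : ℝ) / 2) = t ^ 3 := by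
  rw [← rpow_natCast t 2, ← rpow_mul ht]
  norm_num

lemma eq_of_modulation_condition {lam nu mu gam eta s1 t A B : ℝ} (hlam : lam ≠ 0)
    (hnu : nu ≠ 0) (heta : eta ≠ 0) (ht : t ≠ 0) (hA : A ≠ 0)
    (h : -(mu + s1 / 3 * eta) * (2 * nu * t ^ 3 / (5 * lam)) * A +
      (gam - 2 * lam * eta / nu) * (nu ^ 2 * t ^ 4 / (7 * lam ^ 2)) * (2 * B) = 0) :
    s1 = 15 * nu * t * B / (7 * lam * A) * (gam / eta - 2 * lam / nu) - 3 * mu / eta := by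
  have hfactor : 2 * nu * t ^ 3 / (105 * lam ^ 2) *
      (15 * t * (nu * gam - 2 * lam * eta) * B - 7 * lam * (3 * mu + s1 * eta) * A) = 0 := by
    rw [← h]
    field_simp
    ring
  have hlinear := (mul_eq_zero.1 hfactor).resolve_left (by simp [hnu, ht, hlam])
  field_simp
  linear_combination -hlinear

theorem stmt_18_general (m : ℝ) (hm : m ∈ Set.Ioo (0 : ℝ) 1)
    (K H1 H2 H3 rhobar : ℝ)
    (hK : K = ∫ θ in (0 : ℝ)..(Real.pi / 2),
      (1 - m ^ 2 * Real.sin θ ^ 2) ^ (-(1 : ℝ) / 2))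
    (hH1 : H1 = (18 * m ^ 4 / (1 - m ^ 2 + m ^ 4)) ^ ((1 : ℝ) / 2))
    (hrho : rhobar = (H1 / (m ^ 2 * K ^ 2)) *
      ((3 * H2 + 2 * H3) / (3 * H2 * H3 + 4)))
    (lam nu mu gam eta k P s1 kappa : ℝ)
    (hlam : lam ≠ 0) (heta : eta ≠ 0) (hP : P ≠ 0) (hk : k ≠ 0)
    (hlamnu : 0 < lam * nu)
    (hnum : 3 * H2 + 2 * H3 ≠ 0)
    (hkappa : kappa = (k * K / P) ^ 4 * (12 * lam / nu) ^ 2 *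
      (m ^ 4 - m ^ 2 + 1) / 18)
    (hcond : -(mu + (s1 / 3) * eta) * (2 * nu * kappa ^ ((3 : ℝ) / 2) / (5 * lam)) *
        (3 * H2 + 2 * H3) +
      (gam - 2 * lam * eta / nu) * (nu ^ 2 * kappa ^ 2 / (7 * lam ^ 2)) *
        (6 * H2 * H3 + 8) = 0) :
    s1 = (180 / (7 * rhobar)) * (k / P) ^ 2 * (gam / eta - 2 * lam / nu) -
      3 * mu / eta := by
  obtain ⟨hm0, hm1⟩ := hm
  have hnu : nu ≠ 0 := by rintro rfl; simp at hlamnu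
  have hKpos : 0 < K := hK ▸ integral_one_sub_sq_mul_sin_sq_rpow_pos (by nlinarith) _
  have hD := one_sub_sq_add_pow_four_pos m
  have hH1pos : 0 < H1 := hH1 ▸ rpow_pos_of_pos (by positivity) _
  have hH1sq : H1 ^ 2 = 18 * m ^ 4 / (1 - m ^ 2 + m ^ 4) := hH1 ▸ rpow_half_sq (by positivity)
  set t := (k * K / P) ^ 2 * (12 * lam / nu) * (m ^ 2 / H1) with ht
  have htpos : 0 < t := by
    have hscale : k * K / P ≠ 0 := by simp [hk, hKpos.ne', hP]
    have hratio : 0 < 12 * lam / nu := by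
      rw [mul_div_assoc]
      exact mul_pos (by norm_num) (div_pos_iff.2 (mul_pos_iff.1 hlamnu))
    exact mul_pos (mul_pos (sq_pos_of_ne_zero hscale) hratio) (by positivity)
  have hkappa_sq : kappa = t ^ 2 := by
    rw [hkappa, ht, mul_pow, mul_pow, div_pow (m ^ 2), hH1sq]
    field_simp
    ring
  rw [hkappa_sq, sq_rpow_three_halves htpos.le, ← pow_mul,
    show 6 * H2 * H3 + 8 = 2 * (3 * H2 * H3 + 4) by ring] at hcond
  rw [eq_of_modulation_condition hlam hnu heta htpos.ne' hnum hcond, hrho, ht]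
  simp only [mul_div_assoc', div_div_eq_mul_div]
  field_simp
  ring

/-- The constant-modulus condition
`−(μ + (s₁/3)η)(2νκ^{3/2}/(5λ))(3H₂ + 2H₃)
   + (γ − 2λη/ν)(ν²κ²/(7λ²))(6H₂H₃ + 8) = 0`,
with `κ = (kK(m)/P)⁴(12λ/ν)²(m⁴ − m² + 1)/18`, determines the wave-speed
parameter `s₁ = (180/(7ρ̄(m)))(k/P)²(γ/η − 2λ/ν) − 3μ/η`. -/
theorem stmt_18 (m : ℝ) (hm : m ∈ Set.Ioo (0 : ℝ) 1)
    (K E H1 H2 H3 rhobar : ℝ)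
    (hK : K = ∫ θ in (0 : ℝ)..(Real.pi / 2),
      (1 - m ^ 2 * Real.sin θ ^ 2) ^ (-(1 : ℝ) / 2))
    (hE : E = ∫ θ in (0 : ℝ)..(Real.pi / 2),
      (1 - m ^ 2 * Real.sin θ ^ 2) ^ ((1 : ℝ) / 2))
    (hH1 : H1 = (18 * m ^ 4 / (1 - m ^ 2 + m ^ 4)) ^ ((1 : ℝ) / 2))
    (hH2 : H2 = (H1 ^ 3 / (162 * m ^ 6)) *
      (-2 + 3 * m ^ 2 + 3 * m ^ 4 - 2 * m ^ 6))
    (hH3 : H3 = (H1 / (3 * m ^ 2)) * (3 * E / K + m ^ 2 - 2))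
    (hrho : rhobar = (H1 / (m ^ 2 * K ^ 2)) *
      ((3 * H2 + 2 * H3) / (3 * H2 * H3 + 4)))
    (lam nu mu gam eta k P s1 kappa : ℝ)
    (hlam : lam ≠ 0) (heta : eta ≠ 0) (hP : P ≠ 0) (hk : k ≠ 0)
    (hlamnu : 0 < lam * nu)
    (hnum : 3 * H2 + 2 * H3 ≠ 0) (hden : 3 * H2 * H3 + 4 ≠ 0)
    (hkappa : kappa = (k * K / P) ^ 4 * (12 * lam / nu) ^ 2 *
      (m ^ 4 - m ^ 2 + 1) / 18)
    (hcond : -(mu + (s1 / 3) * eta) * (2 * nu * kappa ^ ((3 : ℝ) / 2) / (5 * lam)) *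
        (3 * H2 + 2 * H3) +
      (gam - 2 * lam * eta / nu) * (nu ^ 2 * kappa ^ 2 / (7 * lam ^ 2)) *
        (6 * H2 * H3 + 8) = 0) :
    s1 = (180 / (7 * rhobar)) * (k / P) ^ 2 * (gam / eta - 2 * lam / nu) -
      3 * mu / eta :=
  stmt_18_general m hm K H1 H2 H3 rhobar hK hH1 hrho lam nu mu gam eta k P s1 kappa hlam heta hP hk
    hlamnu hnum hkappa hcond
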